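/- Let λ_k = (1+|k|)^{−1} log^{−2β}(e+|k|), β > 1/2, and for j ∈ ℤ set γ_j = 1 + ∫₀¹ ((1−log h)^{2β}/h²)·|e^{2πijh}−1|² dh. Then γ_j ≍ 1/λ_j uniformly in j ∈ ℤ, i.e., there are constants c,C > 0 independent of j with c/λ_j ≤ γ_j ≤ C/λ_j. -/

import Mathlib

/-!
Write `m = |ξ|` and `a = 1 / (2m)`, so that `1 - log a = 1 + log (2m) ≍ log (e + m)`.
Since `|e^{2πiξh} - 1| ≤ min (2πmh) 2`, the integral over `(a, 1)` is at most
`4 (1 - log a)^{2β} ∫_a^1 h⁻² dh ≤ 8m (1 - log a)^{2β}`, and the integral over `(0, a]` is at most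
`4π²m² ∫_0^a (1 - log h)^{2β} dh`. A power of a logarithm grows more slowly than a square root,
so `(1 - log h)^{2β} ≤ C (1 - log a)^{2β} (a / h)^{1/2}` for `h ≤ a`, and this piece is
`≲ m (1 - log a)^{2β}` as well. Conversely, on `(a / 2, a)` one has `1/4 ≤ |ξh| ≤ 1/2`, hence
`|e^{2πiξh} - 1| ≥ 1`, while the weight is at least `(1 - log a)^{2β} / a²`; integrating over this
interval of length `a / 2` gives the lower bound `m (1 - log a)^{2β}`.
-/

open MeasureTheory Real Set

lemma exp_two_pi_I_mul_eq_exp_I_mul (x : ℝ) :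
    Complex.exp (2 * π * Complex.I * x) = Complex.exp (Complex.I * ↑(2 * π * x)) := by
  push_cast; ring_nf

lemma norm_exp_two_pi_I_mul_sub_one_le_two (x : ℝ) :
    ‖Complex.exp (2 * π * Complex.I * x) - 1‖ ≤ 2 := by
  calc _ ≤ ‖Complex.exp (2 * π * Complex.I * x)‖ + ‖(1 : ℂ)‖ := norm_sub_le _ _
    _ = 2 := by rw [exp_two_pi_I_mul_eq_exp_I_mul, Complex.norm_exp_I_mul_ofReal]; norm_num

lemma norm_exp_two_pi_I_mul_sub_one_le (x : ℝ) :
    ‖Complex.exp (2 * π * Complex.I * x) - 1‖ ≤ 2 * π * |x| := by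
  rw [exp_two_pi_I_mul_eq_exp_I_mul]
  refine norm_exp_I_mul_ofReal_sub_one_le.trans_eq ?_
  rw [Real.norm_eq_abs, abs_mul, abs_of_pos (by positivity : (0 : ℝ) < 2 * π)]

lemma one_le_norm_exp_two_pi_I_mul_sub_one {x : ℝ} (hx₁ : 1 / 4 ≤ |x|)
    (hx₂ : |x| ≤ 1 / 2) :
    1 ≤ ‖Complex.exp (2 * π * Complex.I * x) - 1‖ := by
  have hcos : cos (2 * π * |x|) ≤ 0 :=
    cos_nonpos_of_pi_div_two_le_of_le (by nlinarith [pi_pos]) (by nlinarith [pi_pos])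
  have hre : (Complex.exp (2 * π * Complex.I * x) - 1).re = cos (2 * π * x) - 1 := by
    rw [exp_two_pi_I_mul_eq_exp_I_mul, mul_comm, Complex.sub_re, Complex.exp_ofReal_mul_I_re,
      Complex.one_re]
  rw [← cos_abs, abs_mul, abs_of_pos (by positivity : (0 : ℝ) < 2 * π)] at hre
  have := Complex.abs_re_le_norm (Complex.exp (2 * π * Complex.I * x) - 1)
  rw [hre, abs_of_neg (by linarith)] at this
  linarith

lemma exists_one_add_rpow_le_mul_exp {p : ℝ} (hp : 0 ≤ p) {ε : ℝ} (hε : 0 < ε) :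
    ∃ C, 0 ≤ C ∧ ∀ t, 0 ≤ t → (1 + t) ^ p ≤ C * exp (ε * t) := by
  set k := p / ε + 1
  have hk : 1 ≤ k := by simp only [k]; have := div_nonneg hp hε.le; linarith
  refine ⟨k ^ p, by positivity, fun t ht => ?_⟩
  calc (1 + t) ^ p ≤ (k * exp (t / k)) ^ p := by
        gcongr
        have := add_one_le_exp (t / k)
        have : k * (t / k + 1) = t + k := by field_simp
        nlinarith
    _ = k ^ p * exp (p / k * t) := by
        rw [mul_rpow (by positivity) (exp_pos _).le, ← exp_mul]; ring_nf
    _ ≤ k ^ p * exp (ε * t) := by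
        gcongr
        rw [div_le_iff₀ (by positivity)]
        simp only [k]; field_simp; linarith

lemma one_sub_log_rpow_le_mul_rpow_neg_half {p C a h : ℝ} (hp : 0 ≤ p)
    (hC : ∀ t, 0 ≤ t → (1 + t) ^ p ≤ C * exp (1 / 2 * t))
    (hh : 0 < h) (hha : h ≤ a) (ha : a ≤ 1) :
    (1 - log h) ^ p ≤ C * (1 - log a) ^ p * (a ^ (1 / 2 : ℝ) * h ^ (-(1 / 2) : ℝ)) := by
  have hloga : log a ≤ 0 := log_nonpos (hh.trans_le hha).le ha
  have hlog : log h ≤ log a := log_le_log hh hha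
  have hwa : 0 ≤ 1 - log a := by linarith
  have hsplit : 1 - log h ≤ (1 - log a) * (1 + (log a - log h)) := by nlinarith
  have hexp : exp (1 / 2 * (log a - log h)) = a ^ (1 / 2 : ℝ) * h ^ (-(1 / 2) : ℝ) := by
    rw [rpow_def_of_pos (hh.trans_le hha), rpow_def_of_pos hh, ← exp_add]
    ring_nf
  calc (1 - log h) ^ p ≤ ((1 - log a) * (1 + (log a - log h))) ^ p :=
        rpow_le_rpow (by linarith) hsplit hp
    _ = (1 - log a) ^ p * (1 + (log a - log h)) ^ p := mul_rpow hwa (by linarith)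
    _ ≤ (1 - log a) ^ p * (C * exp (1 / 2 * (log a - log h))) := by
        gcongr; exact hC (log a - log h) (by linarith)
    _ = C * (1 - log a) ^ p * (a ^ (1 / 2 : ℝ) * h ^ (-(1 / 2) : ℝ)) := by
        rw [hexp]; ring

lemma log_exp_one_add_le_one_add_log_two_mul {m : ℝ} (hm : 1 ≤ m) :
    log (exp 1 + m) ≤ 1 + log (2 * m) :=
  calc log (exp 1 + m) ≤ log (exp 1 * (2 * m)) :=
        log_le_log (by positivity) (by nlinarith [add_one_le_exp 1])
    _ = 1 + log (2 * m) := by rw [log_mul (exp_pos 1).ne' (by positivity), log_exp]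

lemma one_add_log_two_mul_le_two_mul_log_exp_one_add {m : ℝ} (hm : 0 < m) :
    1 + log (2 * m) ≤ 2 * log (exp 1 + m) :=
  calc 1 + log (2 * m) = log (exp 1 * (2 * m)) := by
        rw [log_mul (exp_pos 1).ne' (by positivity), log_exp]
    _ ≤ log ((exp 1 + m) ^ 2) := log_le_log (by positivity) (by nlinarith [sq_nonneg (exp 1 - m)])
    _ = 2 * log (exp 1 + m) := by rw [log_pow]; norm_num

lemma integral_Ioc_zero_rpow_neg_half {a : ℝ} (ha : 0 ≤ a) :
    ∫ h in Ioc 0 a, h ^ (-(1 / 2) : ℝ) = 2 * a ^ (1 / 2 : ℝ) := by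
  rw [← intervalIntegral.integral_of_le ha, integral_rpow (Or.inl (by norm_num)),
    zero_rpow (by norm_num)]
  norm_num
  ring

lemma integral_Ioo_rpow_neg_two {a b : ℝ} (ha : 0 < a) (hab : a ≤ b) :
    ∫ h in Ioo a b, h ^ (-2 : ℝ) = a⁻¹ - b⁻¹ := by
  rw [← integral_Ioc_eq_integral_Ioo, ← intervalIntegral.integral_of_le hab,
    integral_rpow (Or.inr ⟨by norm_num, by rw [uIcc_of_le hab]; exact fun h => ha.not_ge h.1⟩)]
  norm_num [rpow_neg_one]
  ring

lemma integrableOn_Ioo_rpow_neg_two {a b : ℝ} (ha : 0 < a) (hab : a ≤ b) :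
    IntegrableOn (fun h : ℝ => h ^ (-2 : ℝ)) (Ioo a b) :=
  (intervalIntegrable_iff_integrableOn_Ioo_of_le hab).1
    (intervalIntegral.intervalIntegrable_rpow
      (Or.inr (by rw [uIcc_of_le hab]; exact fun h => ha.not_ge h.1)))

lemma integrableOn_Ioc_zero_rpow_neg_half (a : ℝ) :
    IntegrableOn (fun h : ℝ => h ^ (-(1 / 2) : ℝ)) (Ioc 0 a) := by
  rcases le_total 0 a with ha | ha
  · exact (intervalIntegrable_iff_integrableOn_Ioc_of_le ha).1
      (intervalIntegral.intervalIntegrable_rpow' (by norm_num))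
  · simp [Ioc_eq_empty_of_le ha]

noncomputable def gammaIntegrand (β ξ h : ℝ) : ℝ :=
  ((1 - log h) ^ (2 * β) / h ^ 2) *
    ‖Complex.exp (2 * π * Complex.I * ((ξ * h : ℝ) : ℂ)) - 1‖ ^ 2

section Integrand

variable {β ξ h : ℝ}

lemma gammaIntegrand_nonneg (hh : 0 < h) (hh₁ : h ≤ 1) : 0 ≤ gammaIntegrand β ξ h := by
  have : 0 ≤ 1 - log h := by linarith [log_nonpos hh.le hh₁]
  unfold gammaIntegrand
  positivity

lemma gammaIntegrand_le_mul_rpow_neg_half {C a : ℝ} (hβ : 0 ≤ β)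
    (hC : ∀ t, 0 ≤ t → (1 + t) ^ (2 * β) ≤ C * exp (1 / 2 * t))
    (hh : 0 < h) (hha : h ≤ a) (ha : a ≤ 1) :
    gammaIntegrand β ξ h ≤
      4 * π ^ 2 * ξ ^ 2 * C * (1 - log a) ^ (2 * β) * a ^ (1 / 2 : ℝ) *
        h ^ (-(1 / 2) : ℝ) := by
  have hw : 0 ≤ 1 - log h := by linarith [log_nonpos hh.le (hha.trans ha)]
  have hchar : ‖Complex.exp (2 * π * Complex.I * ((ξ * h : ℝ) : ℂ)) - 1‖ ^ 2 ≤
      (2 * π * |ξ * h|) ^ 2 := by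
    gcongr; exact norm_exp_two_pi_I_mul_sub_one_le _
  calc gammaIntegrand β ξ h ≤ ((1 - log h) ^ (2 * β) / h ^ 2) * (2 * π * |ξ * h|) ^ 2 := by
        unfold gammaIntegrand; gcongr
    _ = 4 * π ^ 2 * ξ ^ 2 * (1 - log h) ^ (2 * β) := by
        rw [mul_pow, sq_abs]; field_simp; ring
    _ ≤ 4 * π ^ 2 * ξ ^ 2 *
          (C * (1 - log a) ^ (2 * β) * (a ^ (1 / 2 : ℝ) * h ^ (-(1 / 2) : ℝ))) := by
        gcongr; exact one_sub_log_rpow_le_mul_rpow_neg_half (by linarith) hC hh hha ha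
    _ = _ := by ring

lemma gammaIntegrand_le_mul_rpow_neg_two {a : ℝ} (hβ : 0 ≤ β) (ha : 0 < a) (hah : a ≤ h)
    (hh : h ≤ 1) :
    gammaIntegrand β ξ h ≤ 4 * (1 - log a) ^ (2 * β) * h ^ (-2 : ℝ) := by
  have hh₀ : 0 < h := ha.trans_le hah
  have hchar :
      ‖Complex.exp (2 * π * Complex.I * ((ξ * h : ℝ) : ℂ)) - 1‖ ^ 2 ≤ 2 ^ 2 := by
    gcongr; exact norm_exp_two_pi_I_mul_sub_one_le_two _
  have hw : 0 ≤ 1 - log h := by linarith [log_nonpos hh₀.le hh]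
  have hwa : 0 ≤ 1 - log a := by linarith [log_nonpos ha.le (hah.trans hh)]
  calc gammaIntegrand β ξ h ≤ ((1 - log a) ^ (2 * β) / h ^ 2) * 2 ^ 2 := by
        unfold gammaIntegrand
        gcongr
    _ = _ := by rw [rpow_neg hh₀.le, rpow_two]; ring

lemma one_sub_log_rpow_div_sq_le_gammaIntegrand (hh : 0 < h) (hh₁ : h ≤ 1)
    (hξ₁ : 1 / 4 ≤ |ξ * h|) (hξ₂ : |ξ * h| ≤ 1 / 2) :
    (1 - log h) ^ (2 * β) / h ^ 2 ≤ gammaIntegrand β ξ h := by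
  have : 0 ≤ 1 - log h := by linarith [log_nonpos hh.le hh₁]
  have hchar := one_le_norm_exp_two_pi_I_mul_sub_one hξ₁ hξ₂
  unfold gammaIntegrand
  exact le_mul_of_one_le_right (by positivity) (one_le_pow₀ hchar)

end Integrand

section Integral

variable {β ξ : ℝ}

lemma integrableOn_gammaIntegrand (hβ : 0 ≤ β) (ξ : ℝ) :
    IntegrableOn (gammaIntegrand β ξ) (Ioo 0 1) := by
  obtain ⟨C, -, hC⟩ := exists_one_add_rpow_le_mul_exp (by linarith : 0 ≤ 2 * β)
    (by norm_num : (0 : ℝ) < 1 / 2)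
  refine Integrable.mono' (((integrableOn_Ioc_zero_rpow_neg_half 1).mono_set
    Ioo_subset_Ioc_self).const_mul (4 * π ^ 2 * ξ ^ 2 * C))
    (by unfold gammaIntegrand; fun_prop) ?_
  rw [ae_restrict_iff' measurableSet_Ioo]
  refine ae_of_all _ fun h hh => ?_
  rw [Real.norm_of_nonneg (gammaIntegrand_nonneg hh.1 hh.2.le)]
  simpa using gammaIntegrand_le_mul_rpow_neg_half (ξ := ξ) hβ hC hh.1 hh.2.le le_rfl

lemma le_integral_gammaIntegrand (hβ : 0 ≤ β) (hξ : 1 / 2 ≤ |ξ|) :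
    |ξ| * (1 + log (2 * |ξ|)) ^ (2 * β) ≤ ∫ h in Ioo 0 1, gammaIntegrand β ξ h := by
  set m := |ξ|
  set a := (2 * m)⁻¹
  have ha : 0 < a := by positivity
  have ha₁ : a ≤ 1 := inv_le_one_of_one_le₀ (by linarith)
  have hW : 1 - log a = 1 + log (2 * m) := by simp only [a, log_inv]; ring
  have hwa : 0 ≤ 1 - log a := by linarith [log_nonpos ha.le ha₁]
  have hma : m * a = 1 / 2 := by simp only [a]; field_simp
  have hsub : Ioo (a / 2) a ⊆ Ioo 0 1 := fun h hh => ⟨by linarith [hh.1], by linarith [hh.2]⟩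
  have hlow :
      ∀ h ∈ Ioo (a / 2) a, (1 - log a) ^ (2 * β) * a⁻¹ ^ 2 ≤ gammaIntegrand β ξ h := by
    rintro h ⟨hh₁, hh₂⟩
    have hh : 0 < h := by linarith
    have hmh : |ξ * h| = m * h := by rw [abs_mul, abs_of_pos hh]
    refine le_trans ?_ (one_sub_log_rpow_div_sq_le_gammaIntegrand hh (by linarith) ?_ ?_)
    · have : 0 ≤ 1 - log h := by linarith [log_nonpos hh.le (hh₂.le.trans ha₁)]
      rw [div_eq_mul_inv, ← inv_pow]
      gcongr
    · rw [hmh]; nlinarith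
    · rw [hmh]; nlinarith
  have hint := integrableOn_gammaIntegrand hβ ξ
  calc m * (1 + log (2 * m)) ^ (2 * β)
      = ∫ _ in Ioo (a / 2) a, (1 - log a) ^ (2 * β) * a⁻¹ ^ 2 := by
        rw [setIntegral_const, Real.volume_real_Ioo, smul_eq_mul, hW,
          max_eq_left (by linarith)]
        simp only [a]
        field_simp
        ring
    _ ≤ ∫ h in Ioo (a / 2) a, gammaIntegrand β ξ h :=
        setIntegral_mono_on (integrableOn_const measure_Ioo_lt_top.ne) (hint.mono_set hsub)
          measurableSet_Ioo hlow
    _ ≤ ∫ h in Ioo 0 1, gammaIntegrand β ξ h :=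
        setIntegral_mono_set hint
          ((ae_restrict_iff' measurableSet_Ioo).2
            (ae_of_all _ fun h hh => gammaIntegrand_nonneg hh.1 hh.2.le))
          hsub.eventuallyLE

lemma integral_gammaIntegrand_le {C : ℝ} (hβ : 0 ≤ β)
    (hC : ∀ t, 0 ≤ t → (1 + t) ^ (2 * β) ≤ C * exp (1 / 2 * t)) (hξ : 1 / 2 < |ξ|) :
    ∫ h in Ioo 0 1, gammaIntegrand β ξ h ≤
      (4 * π ^ 2 * C + 8) * |ξ| * (1 + log (2 * |ξ|)) ^ (2 * β) := by
  set m := |ξ|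
  set a := (2 * m)⁻¹
  have ha : 0 < a := by positivity
  have ha₁ : a < 1 := inv_lt_one_of_one_lt₀ (by linarith)
  have hW : 1 - log a = 1 + log (2 * m) := by simp only [a, log_inv]; ring
  have hwa : 0 ≤ 1 - log a := by linarith [log_nonpos ha.le ha₁.le]
  set W := (1 - log a) ^ (2 * β)
  have hm : m ^ 2 = ξ ^ 2 := sq_abs ξ
  have hint := integrableOn_gammaIntegrand hβ ξ
  have hnear : ∫ h in Ioc 0 a, gammaIntegrand β ξ h ≤ 4 * π ^ 2 * C * m * W := by
    calc ∫ h in Ioc 0 a, gammaIntegrand β ξ h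
        ≤ ∫ h in Ioc 0 a,
            4 * π ^ 2 * ξ ^ 2 * C * W * a ^ (1 / 2 : ℝ) * h ^ (-(1 / 2) : ℝ) :=
          setIntegral_mono_on (hint.mono_set (Ioc_subset_Ioo_right ha₁))
            ((integrableOn_Ioc_zero_rpow_neg_half a).const_mul _) measurableSet_Ioc
            fun h hh => gammaIntegrand_le_mul_rpow_neg_half hβ hC hh.1 hh.2 ha₁.le
      _ = 4 * π ^ 2 * ξ ^ 2 * C * W * (2 * (a ^ (1 / 2 : ℝ) * a ^ (1 / 2 : ℝ))) := by
          rw [integral_const_mul, integral_Ioc_zero_rpow_neg_half ha.le]; ring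
      _ = 4 * π ^ 2 * C * m * W := by
          rw [← rpow_add ha, ← hm]; norm_num [a]; field_simp
  have hfar : ∫ h in Ioo a 1, gammaIntegrand β ξ h ≤ 8 * m * W := by
    calc ∫ h in Ioo a 1, gammaIntegrand β ξ h
        ≤ ∫ h in Ioo a 1, 4 * W * h ^ (-2 : ℝ) :=
          setIntegral_mono_on (hint.mono_set (Ioo_subset_Ioo_left ha.le))
            ((integrableOn_Ioo_rpow_neg_two ha ha₁.le).const_mul _) measurableSet_Ioo
            fun h hh => gammaIntegrand_le_mul_rpow_neg_two hβ ha hh.1.le hh.2.le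
      _ = 4 * W * (2 * m - 1) := by
          rw [integral_const_mul, integral_Ioo_rpow_neg_two ha ha₁.le, inv_one, inv_inv]
      _ ≤ 8 * m * W := by nlinarith [rpow_nonneg hwa (2 * β)]
  rw [← Ioc_union_Ioo_eq_Ioo ha.le ha₁,
    setIntegral_union (disjoint_left.2 fun h hh hh' => hh'.1.not_ge hh.2) measurableSet_Ioo
      (hint.mono_set (Ioc_subset_Ioo_right ha₁)) (hint.mono_set (Ioo_subset_Ioo_left ha.le))]
  rw [← hW]
  linarith

lemma one_add_mul_log_rpow_le_two_mul_integral (hβ : 0 ≤ β) (hξ : 1 ≤ |ξ|) :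
    (1 + |ξ|) * log (exp 1 + |ξ|) ^ (2 * β) ≤
      2 * ∫ h in Ioo 0 1, gammaIntegrand β ξ h := by
  have hL : 0 ≤ log (exp 1 + |ξ|) := log_nonneg (by linarith [add_one_le_exp 1])
  calc (1 + |ξ|) * log (exp 1 + |ξ|) ^ (2 * β)
      ≤ 2 * (|ξ| * (1 + log (2 * |ξ|)) ^ (2 * β)) := by
        rw [← mul_assoc]
        gcongr
        · linarith
        · exact log_exp_one_add_le_one_add_log_two_mul hξ
    _ ≤ 2 * ∫ h in Ioo 0 1, gammaIntegrand β ξ h := by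
        gcongr
        exact le_integral_gammaIntegrand hβ (by linarith)

lemma exists_one_add_integral_gammaIntegrand_le (hβ : 0 ≤ β) :
    ∃ C, 1 ≤ C ∧ ∀ ξ : ℝ, 1 ≤ |ξ| → 1 + ∫ h in Ioo 0 1, gammaIntegrand β ξ h ≤
      C * ((1 + |ξ|) * log (exp 1 + |ξ|) ^ (2 * β)) := by
  obtain ⟨C₀, hC₀, hC⟩ := exists_one_add_rpow_le_mul_exp (by linarith : 0 ≤ 2 * β)
    (by norm_num : (0 : ℝ) < 1 / 2)
  set K := 4 * π ^ 2 * C₀ + 8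
  have hK : 0 ≤ K * 2 ^ (2 * β) := by positivity
  refine ⟨1 + K * 2 ^ (2 * β), by linarith, fun ξ hξ => ?_⟩
  set L := log (exp 1 + |ξ|)
  have hL : 1 ≤ L := by
    rw [le_log_iff_exp_le (by positivity)]; linarith
  have hLp : 1 ≤ L ^ (2 * β) := one_le_rpow hL (by linarith)
  have hlog : (1 + log (2 * |ξ|)) ^ (2 * β) ≤ 2 ^ (2 * β) * L ^ (2 * β) := by
    rw [← mul_rpow (by norm_num) (by linarith)]
    gcongr
    · linarith [log_nonneg (by linarith : (1 : ℝ) ≤ 2 * |ξ|)]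
    · exact one_add_log_two_mul_le_two_mul_log_exp_one_add (by linarith)
  calc 1 + ∫ h in Ioo 0 1, gammaIntegrand β ξ h
      ≤ 1 + K * |ξ| * (1 + log (2 * |ξ|)) ^ (2 * β) := by
        gcongr; exact integral_gammaIntegrand_le hβ hC (by linarith)
    _ ≤ 1 + K * |ξ| * (2 ^ (2 * β) * L ^ (2 * β)) := by gcongr
    _ ≤ (1 + K * 2 ^ (2 * β)) * ((1 + |ξ|) * L ^ (2 * β)) := by
        nlinarith [mul_nonneg hK (by linarith : (0 : ℝ) ≤ L ^ (2 * β))]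

end Integral

theorem gamma_equiv_inv_lambda (β : ℝ) (hβ : 1 / 2 < β) :
    ∃ c C : ℝ, 0 < c ∧ 0 < C ∧ ∀ j : ℤ,
      c / ((1 + |(j : ℝ)|)⁻¹ * Real.log (Real.exp 1 + |(j : ℝ)|) ^ (-(2 * β))) ≤
          (1 + ∫ h in Set.Ioo (0 : ℝ) 1, ((1 - Real.log h) ^ (2 * β) / h ^ 2) *
            (‖Complex.exp (2 * Real.pi * Complex.I * (((j : ℝ) * h : ℝ) : ℂ)) - 1‖) ^ 2) ∧
        (1 + ∫ h in Set.Ioo (0 : ℝ) 1, ((1 - Real.log h) ^ (2 * β) / h ^ 2) *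
            (‖Complex.exp (2 * Real.pi * Complex.I * (((j : ℝ) * h : ℝ) : ℂ)) - 1‖) ^ 2) ≤
          C / ((1 + |(j : ℝ)|)⁻¹ * Real.log (Real.exp 1 + |(j : ℝ)|) ^ (-(2 * β))) := by
  have hβ₀ : 0 ≤ β := by linarith
  obtain ⟨C, hC, hupper⟩ := exists_one_add_integral_gammaIntegrand_le hβ₀
  refine ⟨1 / 2, C, by norm_num, by linarith, fun j => ?_⟩
  have hL : 0 ≤ log (exp 1 + |(j : ℝ)|) :=
    log_nonneg (by linarith [add_one_le_exp 1, abs_nonneg (j : ℝ)])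
  have hdiv : ∀ c : ℝ, c / ((1 + |(j : ℝ)|)⁻¹ * log (exp 1 + |(j : ℝ)|) ^ (-(2 * β))) =
      c * ((1 + |(j : ℝ)|) * log (exp 1 + |(j : ℝ)|) ^ (2 * β)) := fun c => by
    rw [rpow_neg hL, ← mul_inv, div_inv_eq_mul]
  change _ ≤ 1 + ∫ h in Ioo 0 1, gammaIntegrand β j h ∧
    1 + ∫ h in Ioo 0 1, gammaIntegrand β j h ≤ _
  rw [hdiv, hdiv]
  rcases eq_or_ne j 0 with rfl | hj
  · norm_num [gammaIntegrand, hC]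
  · have hj' : 1 ≤ |(j : ℝ)| := by exact_mod_cast Int.one_le_abs hj
    have := one_add_mul_log_rpow_le_two_mul_integral hβ₀ hj'
    exact ⟨by linarith, hupper j hj'⟩
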